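/- Let f : ℕ ∪ {0} → ℝ be a probability mass function (f(j) ≥ 0 for all j, ∑_{j=0}^∞ f(j) = 1) with f(0) ∈ (0,1), and for i ≥ 1 let f^{*i} denote the i-fold convolution of f with itself (f^{*1} = f, f^{*(i+1)}(k) = ∑_{j=0}^{k} f^{*i}(j) f(k−j)). Then there exists a constant M > 0 such that for every k ∈ ℕ ∪ {0}, the series ∑_{i=1}^∞ f^{*i}(k) converges and ∑_{i=1}^∞ f^{*i}(k) ≤ M. -/

import Mathlib

/-!
The column sum `∑ᵢ f^{*i}(k)` is the expected number of visits to `k` of the random walk with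
step law `f`; once at `k` the walk stays there with probability `f 0`, so it visits `k` at
most `1 / (1 - f 0)` times on average. Analytically, the partial column sums `U n` satisfy the
renewal recursion `U (n+1) = f + U n ⋆ f`. With `c = 1 / (1 - f 0)` and the bound
`b = (c f 0, c, c, …)`, one has `(f + b ⋆ f)(k) = c ∑_{m ≤ k} f m ≤ b k`, because `1 + c f 0 = c`;
so `U n ≤ b` for all `n` by induction.
-/

/-- The `i`-fold convolution power of a probability mass function on ℕ:
`convPow f 0 = f` represents `f^{*1}`, and `convPow f i` represents `f^{*(i+1)}`,
with `f^{*(i+1)}(k) = ∑_{j=0}^{k} f^{*i}(j) f(k-j)`. -/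
def convPow (f : ℕ → ℝ) : ℕ → ℕ → ℝ
  | 0 => f
  | i + 1 => fun k => ∑ j ∈ Finset.range (k + 1), convPow f i j * f (k - j)

open Finset

lemma convPow_nonneg {f : ℕ → ℝ} (hf : ∀ j, 0 ≤ f j) : ∀ i k, 0 ≤ convPow f i k
  | 0, k => hf k
  | i + 1, _ => sum_nonneg fun j _ => mul_nonneg (convPow_nonneg hf i j) (hf _)

lemma sum_range_succ_convPow (f : ℕ → ℝ) (n k : ℕ) :
    ∑ i ∈ range (n + 1), convPow f i k =
      f k + ∑ j ∈ range (k + 1), (∑ i ∈ range n, convPow f i j) * f (k - j) := by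
  rw [sum_range_succ', add_comm]
  simp only [convPow, sum_mul]
  rw [sum_comm]

noncomputable def renewalBound (f : ℕ → ℝ) : ℕ → ℝ
  | 0 => f 0 * (1 - f 0)⁻¹
  | _ + 1 => (1 - f 0)⁻¹

section

variable {f : ℕ → ℝ}

lemma renewalBound_le (h1 : f 0 < 1) (k : ℕ) : renewalBound f k ≤ (1 - f 0)⁻¹ := by
  have hc : 0 ≤ (1 - f 0)⁻¹ := inv_nonneg.mpr (sub_pos.mpr h1).le
  cases k with
  | zero => exact mul_le_of_le_one_left hc h1.le
  | succ k => exact le_rfl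

lemma renewalBound_nonneg (h0 : 0 ≤ f 0) (h1 : f 0 < 1) (k : ℕ) : 0 ≤ renewalBound f k := by
  have hc : 0 ≤ (1 - f 0)⁻¹ := inv_nonneg.mpr (sub_pos.mpr h1).le
  cases k with
  | zero => exact mul_nonneg h0 hc
  | succ k => exact hc

lemma add_sum_renewalBound_mul (h1 : f 0 ≠ 1) (k : ℕ) :
    f k + ∑ j ∈ range (k + 1), renewalBound f j * f (k - j) =
      (1 - f 0)⁻¹ * ∑ m ∈ range (k + 1), f m := by
  have hreflect : ∑ j ∈ range k, f (k - (j + 1)) = ∑ m ∈ range k, f m := by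
    refine Eq.trans (sum_congr rfl fun j _ => ?_) (sum_range_reflect f k)
    rw [Nat.sub_sub, add_comm]
  have hc : (1 - f 0)⁻¹ * (1 - f 0) = 1 := inv_mul_cancel₀ (sub_ne_zero.mpr h1.symm)
  rw [sum_range_succ', sum_range_succ]
  simp only [renewalBound, ← mul_sum, hreflect, Nat.sub_zero]
  linear_combination -f k * hc

lemma renewal_step_le (hf : ∀ j, 0 ≤ f j) (hpartial : ∀ n, ∑ m ∈ range n, f m ≤ 1)
    (h1 : f 0 < 1) {u : ℕ → ℝ} (hu : ∀ j, u j ≤ renewalBound f j) (k : ℕ) :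
    f k + ∑ j ∈ range (k + 1), u j * f (k - j) ≤ renewalBound f k := by
  calc f k + ∑ j ∈ range (k + 1), u j * f (k - j)
      ≤ f k + ∑ j ∈ range (k + 1), renewalBound f j * f (k - j) := by
        gcongr with j
        · exact hf _
        · exact hu j
    _ = (1 - f 0)⁻¹ * ∑ m ∈ range (k + 1), f m := add_sum_renewalBound_mul h1.ne k
    _ ≤ renewalBound f k := by
        cases k with
        | zero => simp [renewalBound, mul_comm]
        | succ k =>
          exact mul_le_of_le_one_right (inv_nonneg.mpr (sub_pos.mpr h1).le) (hpartial _)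

lemma sum_range_convPow_le (hf : ∀ j, 0 ≤ f j) (hpartial : ∀ n, ∑ m ∈ range n, f m ≤ 1)
    (h1 : f 0 < 1) (n k : ℕ) : ∑ i ∈ range n, convPow f i k ≤ renewalBound f k := by
  induction n generalizing k with
  | zero =>
    rw [sum_range_zero]
    exact renewalBound_nonneg (hf 0) h1 k
  | succ n ih =>
    rw [sum_range_succ_convPow]
    exact renewal_step_le hf hpartial h1 ih k

end

theorem branching_column_sums_bounded_general (f : ℕ → ℝ)
    (hnn : ∀ j, 0 ≤ f j) (hsum : HasSum f 1)
    (h1 : f 0 < 1) :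
    ∃ M : ℝ, 0 < M ∧ ∀ k : ℕ,
      Summable (fun i : ℕ => convPow f i k) ∧ ∑' i : ℕ, convPow f i k ≤ M := by
  have hpartial : ∀ n, ∑ m ∈ range n, f m ≤ 1 := fun n =>
    sum_le_hasSum _ (fun i _ => hnn i) hsum
  refine ⟨(1 - f 0)⁻¹, inv_pos.mpr (sub_pos.mpr h1), fun k => ?_⟩
  have hle : ∀ n, ∑ i ∈ range n, convPow f i k ≤ (1 - f 0)⁻¹ := fun n =>
    (sum_range_convPow_le hnn hpartial h1 n k).trans (renewalBound_le h1 k)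
  have hsummable := summable_of_sum_range_le (fun i => convPow_nonneg hnn i k) hle
  exact ⟨hsummable, hsummable.tsum_le_of_sum_range_le hle⟩

/-- for a probability mass function `f` with `f 0 ∈ (0,1)`, the
column sums of the branching-process transition kernel are uniformly bounded:
there is `M > 0` with `∑_{i=1}^∞ f^{*i}(k) ≤ M` for every `k`. -/
theorem branching_column_sums_bounded (f : ℕ → ℝ)
    (hnn : ∀ j, 0 ≤ f j) (hsum : HasSum f 1)
    (h0 : 0 < f 0) (h1 : f 0 < 1) :
    ∃ M : ℝ, 0 < M ∧ ∀ k : ℕ,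
      Summable (fun i : ℕ => convPow f i k) ∧ ∑' i : ℕ, convPow f i k ≤ M :=
  branching_column_sums_bounded_general f hnn hsum h1
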